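/- For x ≥ 0 and κ > 1, the inequality κ·x·r(x,κ) ≥ 1, where r(x,κ) = (e^{1/(π(κ-1)+2)}/(2κ)) · √((κ-1)(π(κ-1)+2)·2/π²・π) · √(2π) · e^{(1-κ)x²/2}, is equivalent to x²(1-κ)·e^{x²(1-κ)} ≤ (2/(π(1-κ)-2))·e^{2/(π(1-κ)-2)}. -/

import Mathlib

open Real

noncomputable def gfun (x κ : ℝ) : ℝ :=
  (Real.exp (1 / (Real.pi * (κ - 1) + 2)) / (2 * κ)) *
    Real.sqrt ((κ - 1) * (Real.pi * (κ - 1) + 2) / Real.pi) *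
    Real.exp (-(κ * x ^ 2) / 2)

noncomputable def rfun (x κ : ℝ) : ℝ :=
  Real.sqrt (2 * Real.pi) * gfun x κ * Real.exp (x ^ 2 / 2)

/-!
Writing `P = π(κ - 1) + 2` and `t = x²(1 - κ)`, the square of `κ x r(x, κ)` is
`-t P e^{2/P} e^t / 2`, while the right-hand side equals `-2 / (P e^{2/P})`. So the second
inequality says `1 ≤ (κ x r(x, κ))²`, which is the first one because `κ x r(x, κ) ≥ 0`.
-/

lemma rfun_nonneg (x : ℝ) {κ : ℝ} (hκ : 0 ≤ κ) : 0 ≤ rfun x κ := by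
  unfold rfun gfun
  positivity

lemma sq_mul_rfun (x : ℝ) {κ : ℝ} (hκ : 1 ≤ κ) :
    (κ * x * rfun x κ) ^ 2 = -(x ^ 2 * (1 - κ)) * (π * (κ - 1) + 2) *
      exp (2 / (π * (κ - 1) + 2)) * exp (x ^ 2 * (1 - κ)) / 2 := by
  set P := π * (κ - 1) + 2 with hP
  have hP0 : 0 ≤ P := by nlinarith [pi_pos]
  have hκ1 : 0 ≤ κ - 1 := by linarith
  have hκ0 : κ ≠ 0 := by positivity
  have hexp : exp (1 / P) ^ 2 * exp (-(κ * x ^ 2) / 2) ^ 2 * exp (x ^ 2 / 2) ^ 2 =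
      exp (2 / P) * exp (x ^ 2 * (1 - κ)) := by
    simp only [← exp_nat_mul, ← exp_add]
    congr 1
    ring
  calc (κ * x * rfun x κ) ^ 2
      = x ^ 2 * (κ - 1) * P / 2 *
          (exp (1 / P) ^ 2 * exp (-(κ * x ^ 2) / 2) ^ 2 * exp (x ^ 2 / 2) ^ 2) := by
        simp only [rfun, gfun, mul_pow, div_pow, ← hP]
        rw [sq_sqrt (by positivity), sq_sqrt (by positivity)]
        field_simp
    _ = _ := by rw [hexp]; ring

lemma mul_exp_le_div_neg_mul_exp_iff {p : ℝ} (hp : 0 < p) (t : ℝ) :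
    t * exp t ≤ 2 / -p * exp (2 / -p) ↔ 1 ≤ -t * p * exp (2 / p) * exp t / 2 := by
  rw [div_neg, exp_neg, ← div_eq_mul_inv, neg_div, div_div, le_neg, div_le_iff₀ (by positivity)]
  constructor <;> intro h <;> linarith

theorem stmt4 (x κ : ℝ) (hx : 0 ≤ x) (hκ : 1 < κ) :
    1 ≤ κ * x * rfun x κ ↔
      x ^ 2 * (1 - κ) * Real.exp (x ^ 2 * (1 - κ)) ≤
        (2 / (Real.pi * (1 - κ) - 2)) * Real.exp (2 / (Real.pi * (1 - κ) - 2)) := by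
  have hP : 0 < π * (κ - 1) + 2 := by nlinarith [pi_pos]
  have hr : 0 ≤ κ * x * rfun x κ := by
    have := rfun_nonneg x (by linarith : 0 ≤ κ)
    positivity
  rw [show π * (1 - κ) - 2 = -(π * (κ - 1) + 2) by ring, mul_exp_le_div_neg_mul_exp_iff hP,
    ← sq_mul_rfun x hκ.le, one_le_pow_iff_of_nonneg hr two_ne_zero]
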